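/- If x is a binary word and y a binary word such that x·x = μ(y), then there exists a word t with x = μ(t) and y = t·t, where μ is the Thue-Morse morphism. -/

import Mathlib

/-!
Counting letters: `μ y` contains exactly `|y|` ones, so `|y| = 2·#₁(x)` is even and, as
`|x| = |y|`, the first copy of `x` ends at an even position of `μ y`. Cutting `y` in half there
writes `x = μ t = μ s` with `y = t ++ s`, and injectivity of `μ` gives `t = s`.
-/

/-- Thue–Morse morphism: μ(0)=01, μ(1)=10, encoding 0 = false, 1 = true. -/
def mu (w : List Bool) : List Bool := w.flatMap fun b => [b, !b]

/-- A word is an overlap if it has the form a·x·a·x·a for a letter a. -/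
def IsOverlap (w : List Bool) : Prop :=
  ∃ (a : Bool) (x : List Bool), w = [a] ++ x ++ [a] ++ x ++ [a]

/-- A word contains an overlap as a factor. -/
def HasOverlap (w : List Bool) : Prop := ∃ f, f <:+: w ∧ IsOverlap f

/-- A word is overlap-free if no factor is an overlap. -/
def OverlapFree (w : List Bool) : Prop := ∀ f, f <:+: w → ¬ IsOverlap f

lemma mu_cons (a : Bool) (w : List Bool) : mu (a :: w) = a :: (!a) :: mu w := rfl

lemma mu_append (u v : List Bool) : mu (u ++ v) = mu u ++ mu v := List.flatMap_append

lemma length_mu (w : List Bool) : (mu w).length = 2 * w.length := by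
  induction w with
  | nil => rfl
  | cons a w ih => simp only [mu_cons, List.length_cons, ih]; ring

lemma count_true_mu (w : List Bool) : (mu w).count true = w.length := by
  induction w with
  | nil => rfl
  | cons a w ih => cases a <;> simp [mu_cons, ih]

lemma mu_injective : Function.Injective mu := by
  intro u
  induction u with
  | nil => rintro (_ | ⟨b, v⟩) h <;> simp_all [mu]
  | cons a u ih =>
    rintro (_ | ⟨b, v⟩) h
    · simp [mu] at h
    · simp only [mu_cons, List.cons.injEq] at h
      rw [h.1, ih h.2.2]

lemma exists_mu_of_mu_eq_append {y u v : List Bool} (h : mu y = u ++ v) (hu : Even u.length) :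
    ∃ t s, y = t ++ s ∧ u = mu t ∧ v = mu s := by
  obtain ⟨n, hn⟩ := hu
  have hle : n ≤ y.length := by
    have := congrArg List.length h
    rw [length_mu, List.length_append] at this
    omega
  have hsplit : u ++ v = mu (y.take n) ++ mu (y.drop n) := by
    rw [← h, ← mu_append, List.take_append_drop]
  obtain ⟨hut, hvs⟩ := List.append_inj hsplit (by rw [length_mu, List.length_take]; omega)
  exact ⟨y.take n, y.drop n, (List.take_append_drop n y).symm, hut, hvs⟩

theorem stmt_3 (x y : List Bool) (h : x ++ x = mu y) :
    ∃ t : List Bool, x = mu t ∧ y = t ++ t := by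
  have hlen : x.length = y.length := by
    have := congrArg List.length h
    rw [List.length_append, length_mu] at this
    omega
  have hcount : y.length = 2 * x.count true := by
    rw [← count_true_mu, ← h, List.count_append]
    ring
  obtain ⟨t, s, rfl, hxt, hxs⟩ := exists_mu_of_mu_eq_append h.symm ⟨x.count true, by omega⟩
  obtain rfl : t = s := mu_injective (hxt.symm.trans hxs)
  exact ⟨t, hxt, rfl⟩
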